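/- Let γ ∈ (0,1), and suppose ε ≥ 0, d > 0, c_max > 0, T_k, T_u ∈ ℕ. If d' ≤ ε/γ^{T_k} - γ^{T_u} c_max/(1-γ), then (d - ε) + γ^{T_k} d' + γ^{T_k + T_u} Σ_{k=1}^∞ γ^k c_max ≤ d, i.e., a trajectory spending budget d - ε in known states, then d' (discounted by γ^{T_k}) in unknown states, followed by worst-case tail cost, still satisfies the overall budget d. -/

import Mathlib

theorem escape_budget_known_start (γ ε d c_max d' : ℝ) (T_k T_u : ℕ)
    (hγ0 : 0 < γ) (hγ1 : γ < 1) (hε : 0 ≤ ε) (hd : 0 < d) (hc : 0 < c_max)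
    (hd' : d' ≤ ε / γ ^ T_k - γ ^ T_u * c_max / (1 - γ)) :
    (d - ε) + γ ^ T_k * d' + γ ^ (T_k + T_u) * (∑' k : ℕ, γ ^ (k + 1) * c_max) ≤ d := by
  have h1γ : 0 < 1 - γ := by linarith
  have hpk : (0:ℝ) < γ ^ T_k := pow_pos hγ0 _
  have hsum : (∑' k : ℕ, γ ^ (k + 1) * c_max) = γ / (1 - γ) * c_max := by
    have hgeo : (∑' k : ℕ, γ ^ k) = (1 - γ)⁻¹ :=
      tsum_geometric_of_lt_one (le_of_lt hγ0) hγ1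
    calc (∑' k : ℕ, γ ^ (k + 1) * c_max)
        = (∑' k : ℕ, γ ^ k) * (γ * c_max) := by
          rw [← tsum_mul_right]
          apply tsum_congr
          intro k
          rw [pow_succ]; ring
      _ = γ / (1 - γ) * c_max := by rw [hgeo]; field_simp
  rw [hsum]
  have hd'' : γ ^ T_k * d' ≤ ε - γ ^ (T_k + T_u) * c_max / (1 - γ) := by
    have := mul_le_mul_of_nonneg_left hd' (le_of_lt hpk)
    calc γ ^ T_k * d' ≤ γ ^ T_k * (ε / γ ^ T_k - γ ^ T_u * c_max / (1 - γ)) := this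
      _ = ε - γ ^ (T_k + T_u) * c_max / (1 - γ) := by
          rw [pow_add]; field_simp
  have htail : γ ^ (T_k + T_u) * (γ / (1 - γ) * c_max)
      ≤ γ ^ (T_k + T_u) * c_max / (1 - γ) := by
    have hp : (0:ℝ) < γ ^ (T_k + T_u) := pow_pos hγ0 _
    rw [div_eq_mul_inv]
    have : γ / (1 - γ) * c_max ≤ c_max * (1 - γ)⁻¹ := by
      rw [div_eq_mul_inv]
      have : γ * (1 - γ)⁻¹ * c_max ≤ 1 * (1 - γ)⁻¹ * c_max := by
        apply mul_le_mul_of_nonneg_right _ (le_of_lt hc)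
        exact mul_le_mul_of_nonneg_right (le_of_lt hγ1) (by positivity)
      linarith [this]
    calc γ ^ (T_k + T_u) * (γ / (1 - γ) * c_max)
        ≤ γ ^ (T_k + T_u) * (c_max * (1 - γ)⁻¹) :=
          mul_le_mul_of_nonneg_left this (le_of_lt hp)
      _ = γ ^ (T_k + T_u) * c_max * (1 - γ)⁻¹ := by ring
  linarith
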